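/- Let A be a max-automaton and m ≥ 0. The relation ≡_m is a congruence on Σ^*: it is an equivalence relation, and x ≡_m x' implies xz ≡_m x'z for every z ∈ Σ^*. -/
import Mathlib


/-- Counter operations over a set `C` of counters. -/
inductive CounterOp (C : Type*) where
  | inc : C → CounterOp C
  | reset : C → CounterOp C
  | max : C → C → C → CounterOp C

/-- Applying a single counter operation to a counter valuation. -/
def applyOp {C : Type*} [DecidableEq C] (ν : C → ℕ) : CounterOp C → C → ℕ
  | .inc c => Function.update ν c (ν c + 1)
  | .reset c => Function.update ν c 0
  | .max c c₀ c₁ => Function.update ν c (Nat.max (ν c₀) (ν c₁))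

/-- Applying a finite sequence of counter operations to a counter valuation. -/
def applyOps {C : Type*} [DecidableEq C] (ν : C → ℕ) : List (CounterOp C) → C → ℕ
  | [] => ν
  | op :: π => applyOps (applyOp ν op) π

/-- The transfer relation of a single counter operation. -/
def opTransfers {C : Type*} : CounterOp C → C → C → Prop
  | .inc _, c, d => c = d
  | .reset e, c, d => c = d ∧ c ≠ e
  | .max e c₀ c₁, c, d => (c = d ∧ c ≠ e) ∨ ((c = c₀ ∨ c = c₁) ∧ d = e)

/-- `Transfers π c d`: the sequence `π` of counter operations transfers counter `c`
to counter `d`. -/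
def Transfers {C : Type*} : List (CounterOp C) → C → C → Prop
  | [], c, d => c = d
  | op :: π, c, d => ∃ e, opTransfers op c e ∧ Transfers π e d

/-- `TransfersWith π c d m`: `π` transfers `c` to `d` with `m` increments, i.e. `π`
decomposes as `π₀ (inc e₁) π₁ ⋯ (inc e_m) π_m` with `π₀` transferring `c` to `e₁`,
`π_j` transferring `e_j` to `e_{j+1}`, and `π_m` transferring `e_m` to `d`. -/
inductive TransfersWith {C : Type*} : List (CounterOp C) → C → C → ℕ → Prop where
  | zero {π : List (CounterOp C)} {c d : C} :
      Transfers π c d → TransfersWith π c d 0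
  | step {π₀ π : List (CounterOp C)} {c e d : C} {m : ℕ} :
      Transfers π₀ c e → TransfersWith π e d m →
      TransfersWith (π₀ ++ CounterOp.inc e :: π) c d (m + 1)

/-- `π` is a `c`-trace of length `m`: it transfers some counter to `c` with `m` increments. -/
def IsTrace {C : Type*} (π : List (CounterOp C)) (c : C) (m : ℕ) : Prop :=
  ∃ c', TransfersWith π c' c m

/-- A (deterministic, complete) max-automaton with states `Q`, counters `C` and
input alphabet `S`: each transition is labeled by a finite sequence of counter
operations, and the acceptance condition is a boolean combination of the
per-counter conditions "`limsup ρ_c < ∞`". -/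
structure MaxAutomaton (S Q C : Type*) where
  init : Q
  step : Q → S → Q
  label : Q → S → List (CounterOp C)
  acc : (C → Prop) → Prop

namespace MaxAutomaton

variable {S Q C : Type*}

/-- The state of the (unique) run on `α` after `n` letters. -/
def stateAt (A : MaxAutomaton S Q C) (α : ℕ → S) : ℕ → Q
  | 0 => A.init
  | n + 1 => A.step (stateAt A α n) (α n)

/-- The counter valuation reached on the run on `α` after applying all operations
of the first `n` transition labels, starting from the zero valuation. -/
def valSeq [DecidableEq C] (A : MaxAutomaton S Q C) (α : ℕ → S) : ℕ → C → ℕ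
  | 0 => fun _ => 0
  | n + 1 => applyOps (valSeq A α n) (A.label (stateAt A α n) (α n))

/-- The run of `A` on `α` is accepting iff the acceptance condition is satisfied by
the assignment mapping counter `c` to true iff `limsup ρ_c < ∞`. -/
def Accepts [DecidableEq C] (A : MaxAutomaton S Q C) (α : ℕ → S) : Prop :=
  A.acc fun c => Filter.limsup (fun n => ((valSeq A α n c : ℕ) : ℕ∞)) Filter.atTop < ⊤

/-- The language of the max-automaton `A`. -/
def Lang [DecidableEq C] (A : MaxAutomaton S Q C) : Set (ℕ → S) :=
  { α | A.Accepts α }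

/-- The flattening of the labels of the first `n` transitions of the run of `A` on `α`. -/
def labelSeq (A : MaxAutomaton S Q C) (α : ℕ → S) : ℕ → List (CounterOp C)
  | 0 => []
  | n + 1 => labelSeq A α n ++ A.label (stateAt A α n) (α n)

/-- The run of `A` on `α` contains `π`: some prefix of the run ends with `π`. -/
def RunContains (A : MaxAutomaton S Q C) (α : ℕ → S) (π : List (CounterOp C)) : Prop :=
  ∃ n, π <:+ A.labelSeq α n

/-- The extended transition function `δ* : Q × Σ* → Q`. -/
def extStep (A : MaxAutomaton S Q C) : Q → List S → Q
  | q, [] => q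
  | q, a :: x => extStep A (A.step q a) x

/-- `ℓ(q, x)`: the sequence of transition labels along the run of `A` on `x` from `q`. -/
def labelsFrom (A : MaxAutomaton S Q C) : Q → List S → List (List (CounterOp C))
  | _, [] => []
  | q, a :: x => A.label q a :: labelsFrom A (A.step q a) x

end MaxAutomaton

/-- The flattening of a sequence of transition labels into a single sequence of
counter operations. -/
def flatLabels {C : Type*} (l : List (List (CounterOp C))) : List (CounterOp C) :=
  l.foldr (· ++ ·) []

/-- `l` has an infix whose flattening has a suffix that is a `c`-trace of length `m`. -/
def CondInfixTrace {C : Type*} (l : List (List (CounterOp C))) (c : C) (m : ℕ) : Prop :=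
  ∃ μ, μ <:+: l ∧ ∃ π, π <:+ flatLabels μ ∧ IsTrace π c m

/-- The flattening of `l` has a suffix that is a `c`-trace of length `m`. -/
def CondSuffixTrace {C : Type*} (l : List (List (CounterOp C))) (c : C) (m : ℕ) : Prop :=
  ∃ π, π <:+ flatLabels l ∧ IsTrace π c m

/-- The flattening of `l` transfers `c` to `d` with `m` increments. -/
def CondTransfer {C : Type*} (l : List (List (CounterOp C))) (c d : C) (m : ℕ) : Prop :=
  TransfersWith (flatLabels l) c d m

/-- `l` has a prefix whose flattening transfers `c` to `d` with `m` increments. -/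
def CondPrefixTransfer {C : Type*} (l : List (List (CounterOp C))) (c d : C) (m : ℕ) : Prop :=
  ∃ μ, μ <+: l ∧ TransfersWith (flatLabels μ) c d m

/-- The equivalence `≡_m^ops` on sequences of transition labels. -/
def EqOps {C : Type*} (m : ℕ) (l l' : List (List (CounterOp C))) : Prop :=
  ∀ (c d : C) (m' : ℕ), m' ≤ m →
    (CondInfixTrace l c m' ↔ CondInfixTrace l' c m') ∧
    (CondSuffixTrace l c m' ↔ CondSuffixTrace l' c m') ∧
    (CondTransfer l c d m' ↔ CondTransfer l' c d m') ∧
    (CondPrefixTransfer l c d m' ↔ CondPrefixTransfer l' c d m')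

/-- The equivalence `≡_m` on finite words: same transition profile and
`≡_m^ops`-equivalent label sequences from every state. -/
def EqWord {S Q C : Type*} (A : MaxAutomaton S Q C) (m : ℕ) (x x' : List S) : Prop :=
  (∀ q, A.extStep q x = A.extStep q x') ∧
  ∀ q, EqOps m (A.labelsFrom q x) (A.labelsFrom q x')

section Aux

variable {S Q C : Type*}

lemma flatLabels_append (l L : List (List (CounterOp C))) :
    flatLabels (l ++ L) = flatLabels l ++ flatLabels L := by
  induction l with
  | nil => rfl
  | cons a l ih => simp [flatLabels, List.foldr] at *; rw [ih]

lemma flatLabels_suffix {s l : List (List (CounterOp C))} (h : s <:+ l) :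
    flatLabels s <:+ flatLabels l := by
  obtain ⟨t, rfl⟩ := h
  rw [flatLabels_append]; exact ⟨flatLabels t, rfl⟩

lemma transfers_append {a b : List (CounterOp C)} {c d : C} :
    Transfers (a ++ b) c d ↔ ∃ e, Transfers a c e ∧ Transfers b e d := by
  induction a generalizing c with
  | nil =>
    constructor
    · exact fun h => ⟨c, rfl, h⟩
    · rintro ⟨e, rfl, h⟩; exact h
  | cons op a ih =>
    constructor
    · rintro ⟨e, hop, h⟩
      obtain ⟨f, h1, h2⟩ := ih.1 h
      exact ⟨f, ⟨e, hop, h1⟩, h2⟩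
    · rintro ⟨f, ⟨e, hop, h1⟩, h2⟩
      exact ⟨e, hop, ih.2 ⟨f, h1, h2⟩⟩

lemma transfers_transfersWith {π₀ π : List (CounterOp C)} {c e d : C} {m : ℕ}
    (h0 : Transfers π₀ c e) (h : TransfersWith π e d m) :
    TransfersWith (π₀ ++ π) c d m := by
  induction h generalizing π₀ c with
  | zero h' => exact .zero (transfers_append.2 ⟨_, h0, h'⟩)
  | step h1 h2 ih =>
    rw [← List.append_assoc]
    exact .step (transfers_append.2 ⟨_, h0, h1⟩) h2

lemma transfersWith_append_of {π₁ π₂ : List (CounterOp C)} {c e d : C} {m₁ m₂ : ℕ}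
    (h1 : TransfersWith π₁ c e m₁) (h2 : TransfersWith π₂ e d m₂) :
    TransfersWith (π₁ ++ π₂) c d (m₁ + m₂) := by
  induction h1 with
  | zero h => simpa using transfers_transfersWith h h2
  | @step π₀ π c' f d' m h0 _ ih =>
    rw [List.append_assoc, List.cons_append]
    have := TransfersWith.step h0 (ih h2)
    simpa [Nat.add_assoc, Nat.add_comm m₂ 1, Nat.add_left_comm] using this

lemma transfersWith_append_iff {π₁ π₂ : List (CounterOp C)} {c d : C} {m : ℕ} :
    TransfersWith (π₁ ++ π₂) c d m ↔
      ∃ e m₁ m₂, m₁ + m₂ = m ∧ TransfersWith π₁ c e m₁ ∧ TransfersWith π₂ e d m₂ := by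
  constructor
  · intro h
    generalize hp : π₁ ++ π₂ = p at h
    induction h generalizing π₁ π₂ with
    | zero h' =>
      subst hp
      obtain ⟨e, h1, h2⟩ := transfers_append.1 h'
      exact ⟨e, 0, 0, rfl, .zero h1, .zero h2⟩
    | @step π₀ π c' f d' m' h0 hw ih =>
      rcases List.append_eq_append_iff.1 hp with ⟨a', rfl, rfl⟩ | ⟨c'', rfl, hc⟩
      · -- π₀ = π₁ ++ a', π₂ = a' ++ inc f :: π
        obtain ⟨g, hg1, hg2⟩ := transfers_append.1 h0
        exact ⟨g, 0, m' + 1, by omega, .zero hg1, .step hg2 hw⟩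
      · -- π₁ = π₀ ++ c'', c'' ++ π₂ = inc f :: π
        cases c'' with
        | nil =>
          simp only [List.nil_append] at hc
          subst hc
          exact ⟨f, 0, m' + 1, by omega, .zero (by simpa using h0),
            TransfersWith.step (π₀ := []) (show Transfers [] f f from rfl) hw⟩
        | cons op c''' =>
          simp only [List.cons_append, List.cons.injEq] at hc
          obtain ⟨rfl, hc⟩ := hc
          obtain ⟨g, m₁, m₂, hsum, hA, hB⟩ := ih hc.symm
          exact ⟨g, m₁ + 1, m₂, by omega, .step h0 hA, hB⟩
  · rintro ⟨e, m₁, m₂, rfl, h1, h2⟩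
    exact transfersWith_append_of h1 h2

lemma suffix_append_decomp {α : Type*} {π a b : List α} :
    π <:+ a ++ b ↔ π <:+ b ∨ ∃ π₁, π₁ <:+ a ∧ π = π₁ ++ b := by
  constructor
  · rintro ⟨t, ht⟩
    rcases List.append_eq_append_iff.1 ht with ⟨a', rfl, rfl⟩ | ⟨c', rfl, rfl⟩
    · exact .inr ⟨a', ⟨t, rfl⟩, rfl⟩
    · exact .inl ⟨c', rfl⟩
  · rintro (⟨t, rfl⟩ | ⟨π₁, ⟨t, rfl⟩, rfl⟩)
    · exact ⟨a ++ t, by simp⟩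
    · exact ⟨t, by simp⟩

lemma prefix_append_decomp {α : Type*} {μ a b : List α} :
    μ <+: a ++ b ↔ μ <+: a ∨ ∃ μ₂, μ₂ <+: b ∧ μ = a ++ μ₂ := by
  constructor
  · rintro ⟨t, ht⟩
    rcases List.append_eq_append_iff.1 ht with ⟨a', rfl, rfl⟩ | ⟨c', rfl, rfl⟩
    · exact .inl ⟨a', rfl⟩
    · exact .inr ⟨c', ⟨t, rfl⟩, rfl⟩
  · rintro (⟨t, rfl⟩ | ⟨μ₂, ⟨t, rfl⟩, rfl⟩)
    · exact ⟨t ++ b, by simp⟩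
    · exact ⟨t, by simp⟩

lemma infix_append_decomp {α : Type*} {μ a b : List α} :
    μ <:+: a ++ b ↔ μ <:+: a ∨ μ <:+: b ∨ ∃ s p, s <:+ a ∧ p <+: b ∧ μ = s ++ p := by
  constructor
  · rintro ⟨s, t, ht⟩
    rw [List.append_assoc] at ht
    rcases List.append_eq_append_iff.1 ht with ⟨a', rfl, ha⟩ | ⟨c', rfl, hc⟩
    · rcases List.append_eq_append_iff.1 ha with ⟨b', rfl, rfl⟩ | ⟨c'', rfl, rfl⟩
      · exact .inl ((List.prefix_append μ b').isInfix.trans ⟨s, [], by simp⟩)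
      · exact .inr (.inr ⟨a', c'', ⟨s, rfl⟩, ⟨t, rfl⟩, rfl⟩)
    · exact .inr (.inl ⟨c', t, by rw [List.append_assoc, hc]⟩)
  · rintro (h | h | ⟨s, p, ⟨u, rfl⟩, ⟨v, rfl⟩, rfl⟩)
    · exact h.trans ⟨[], b, by simp⟩
    · exact h.trans ⟨a, [], by simp⟩
    · exact ⟨u, v, by simp⟩

lemma condTransfer_append {l L : List (List (CounterOp C))} {c d : C} {m : ℕ} :
    CondTransfer (l ++ L) c d m ↔
      ∃ e m₁ m₂, m₁ + m₂ = m ∧ CondTransfer l c e m₁ ∧ CondTransfer L e d m₂ := by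
  unfold CondTransfer
  rw [flatLabels_append, transfersWith_append_iff]

lemma condSuffixTrace_append {l L : List (List (CounterOp C))} {c : C} {m : ℕ} :
    CondSuffixTrace (l ++ L) c m ↔
      CondSuffixTrace L c m ∨
        ∃ e m₁ m₂, m₁ + m₂ = m ∧ CondSuffixTrace l e m₁ ∧ CondTransfer L e c m₂ := by
  unfold CondSuffixTrace CondTransfer IsTrace
  rw [flatLabels_append]
  constructor
  · rintro ⟨π, hπ, c', h⟩
    rcases suffix_append_decomp.1 hπ with h' | ⟨π₁, h1, rfl⟩
    · exact .inl ⟨π, h', c', h⟩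
    · obtain ⟨e, m₁, m₂, hsum, hA, hB⟩ := transfersWith_append_iff.1 h
      exact .inr ⟨e, m₁, m₂, hsum, ⟨π₁, h1, c', hA⟩, hB⟩
  · rintro (⟨π, hπ, c', h⟩ | ⟨e, m₁, m₂, hsum, ⟨π₁, h1, c', hA⟩, hB⟩)
    · exact ⟨π, suffix_append_decomp.2 (.inl hπ), c', h⟩
    · exact ⟨π₁ ++ flatLabels L, suffix_append_decomp.2 (.inr ⟨π₁, h1, rfl⟩), c',
        hsum ▸ transfersWith_append_of hA hB⟩

lemma condPrefixTransfer_append {l L : List (List (CounterOp C))} {c d : C} {m : ℕ} :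
    CondPrefixTransfer (l ++ L) c d m ↔
      CondPrefixTransfer l c d m ∨
        ∃ e m₁ m₂, m₁ + m₂ = m ∧ CondTransfer l c e m₁ ∧ CondPrefixTransfer L e d m₂ := by
  unfold CondPrefixTransfer CondTransfer
  constructor
  · rintro ⟨μ, hμ, h⟩
    rcases prefix_append_decomp.1 hμ with h' | ⟨μ₂, h2, rfl⟩
    · exact .inl ⟨μ, h', h⟩
    · rw [flatLabels_append] at h
      obtain ⟨e, m₁, m₂, hsum, hA, hB⟩ := transfersWith_append_iff.1 h
      exact .inr ⟨e, m₁, m₂, hsum, hA, μ₂, h2, hB⟩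
  · rintro (⟨μ, hμ, h⟩ | ⟨e, m₁, m₂, hsum, hA, μ₂, h2, hB⟩)
    · exact ⟨μ, prefix_append_decomp.2 (.inl hμ), h⟩
    · exact ⟨l ++ μ₂, prefix_append_decomp.2 (.inr ⟨μ₂, h2, rfl⟩),
        by rw [flatLabels_append]; exact hsum ▸ transfersWith_append_of hA hB⟩

lemma condInfixTrace_append {l L : List (List (CounterOp C))} {c : C} {m : ℕ} :
    CondInfixTrace (l ++ L) c m ↔
      CondInfixTrace l c m ∨ CondInfixTrace L c m ∨
        ∃ e m₁ m₂, m₁ + m₂ = m ∧ CondSuffixTrace l e m₁ ∧ CondPrefixTransfer L e c m₂ := by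
  constructor
  · rintro ⟨μ, hμ, π, hπ, c', h⟩
    rcases infix_append_decomp.1 hμ with h' | h' | ⟨s, p, hs, hp, rfl⟩
    · exact .inl ⟨μ, h', π, hπ, c', h⟩
    · exact .inr (.inl ⟨μ, h', π, hπ, c', h⟩)
    · rw [flatLabels_append] at hπ
      rcases suffix_append_decomp.1 hπ with h' | ⟨π₁, h1, rfl⟩
      · exact .inr (.inl ⟨p, hp.isInfix, π, h', c', h⟩)
      · obtain ⟨e, m₁, m₂, hsum, hA, hB⟩ := transfersWith_append_iff.1 h
        exact .inr (.inr ⟨e, m₁, m₂, hsum,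
          ⟨π₁, h1.trans (flatLabels_suffix hs), c', hA⟩, ⟨p, hp, hB⟩⟩)
  · rintro (⟨μ, hμ, hrest⟩ | ⟨μ, hμ, hrest⟩ |
      ⟨e, m₁, m₂, hsum, ⟨π₁, h1, c', hA⟩, μ₂, h2, hB⟩)
    · exact ⟨μ, hμ.trans ⟨[], L, by simp⟩, hrest⟩
    · exact ⟨μ, hμ.trans ⟨l, [], by simp⟩, hrest⟩
    · refine ⟨l ++ μ₂, ?_, π₁ ++ flatLabels μ₂, ?_, c', hsum ▸ transfersWith_append_of hA hB⟩
      · exact infix_append_decomp.2 (.inr (.inr ⟨l, μ₂, List.suffix_refl l, h2, rfl⟩))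
      · rw [flatLabels_append]
        obtain ⟨t, ht⟩ := h1
        exact ⟨t, by rw [← List.append_assoc, ht]⟩

lemma eqOps_append {m : ℕ} {l l' L : List (List (CounterOp C))}
    (h : EqOps m l l') : EqOps m (l ++ L) (l' ++ L) := by
  intro c d m' hm'
  have key : ∀ (c d : C) (k : ℕ), k ≤ m →
      (CondInfixTrace l c k ↔ CondInfixTrace l' c k) ∧
      (CondSuffixTrace l c k ↔ CondSuffixTrace l' c k) ∧
      (CondTransfer l c d k ↔ CondTransfer l' c d k) ∧
      (CondPrefixTransfer l c d k ↔ CondPrefixTransfer l' c d k) := h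
  refine ⟨?_, ?_, ?_, ?_⟩
  · rw [condInfixTrace_append, condInfixTrace_append]
    constructor <;> rintro (h' | h' | ⟨e, m₁, m₂, hsum, hA, hB⟩)
    · exact .inl ((key c d m' hm').1.1 h')
    · exact .inr (.inl h')
    · exact .inr (.inr ⟨e, m₁, m₂, hsum, (key e d m₁ (by omega)).2.1.1 hA, hB⟩)
    · exact .inl ((key c d m' hm').1.2 h')
    · exact .inr (.inl h')
    · exact .inr (.inr ⟨e, m₁, m₂, hsum, (key e d m₁ (by omega)).2.1.2 hA, hB⟩)
  · rw [condSuffixTrace_append, condSuffixTrace_append]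
    constructor <;> rintro (h' | ⟨e, m₁, m₂, hsum, hA, hB⟩)
    · exact .inl h'
    · exact .inr ⟨e, m₁, m₂, hsum, (key e d m₁ (by omega)).2.1.1 hA, hB⟩
    · exact .inl h'
    · exact .inr ⟨e, m₁, m₂, hsum, (key e d m₁ (by omega)).2.1.2 hA, hB⟩
  · rw [condTransfer_append, condTransfer_append]
    constructor <;> rintro ⟨e, m₁, m₂, hsum, hA, hB⟩
    · exact ⟨e, m₁, m₂, hsum, (key c e m₁ (by omega)).2.2.1.1 hA, hB⟩
    · exact ⟨e, m₁, m₂, hsum, (key c e m₁ (by omega)).2.2.1.2 hA, hB⟩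
  · rw [condPrefixTransfer_append, condPrefixTransfer_append]
    constructor <;> rintro (h' | ⟨e, m₁, m₂, hsum, hA, hB⟩)
    · exact .inl ((key c d m' hm').2.2.2.1 h')
    · exact .inr ⟨e, m₁, m₂, hsum, (key c e m₁ (by omega)).2.2.1.1 hA, hB⟩
    · exact .inl ((key c d m' hm').2.2.2.2 h')
    · exact .inr ⟨e, m₁, m₂, hsum, (key c e m₁ (by omega)).2.2.1.2 hA, hB⟩

lemma extStep_append (A : MaxAutomaton S Q C) (q : Q) (x z : List S) :
    A.extStep q (x ++ z) = A.extStep (A.extStep q x) z := by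
  induction x generalizing q with
  | nil => rfl
  | cons a x ih => exact ih (A.step q a)

lemma labelsFrom_append (A : MaxAutomaton S Q C) (q : Q) (x z : List S) :
    A.labelsFrom q (x ++ z) = A.labelsFrom q x ++ A.labelsFrom (A.extStep q x) z := by
  induction x generalizing q with
  | nil => rfl
  | cons a x ih => simp [MaxAutomaton.labelsFrom, MaxAutomaton.extStep, ih]

end Aux

/-- `≡_m` is a congruence: an equivalence relation compatible with appending words
on the right. -/
theorem eqWord_congruence
    {S Q C : Type*} [Fintype S] [Fintype Q] [Fintype C]
    (A : MaxAutomaton S Q C) (m : ℕ) :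
    Equivalence (EqWord A m) ∧
    ∀ x x' z : List S, EqWord A m x x' → EqWord A m (x ++ z) (x' ++ z) := by
  constructor
  · refine ⟨fun x => ⟨fun q => rfl, fun q c d m' _ => ⟨Iff.rfl, Iff.rfl, Iff.rfl, Iff.rfl⟩⟩,
      fun {x y} h => ⟨fun q => (h.1 q).symm, fun q c d m' hm' => ?_⟩,
      fun {x y z} h1 h2 => ⟨fun q => (h1.1 q).trans (h2.1 q), fun q c d m' hm' => ?_⟩⟩
    · obtain ⟨i, s, t, p⟩ := h.2 q c d m' hm'
      exact ⟨i.symm, s.symm, t.symm, p.symm⟩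
    · obtain ⟨i1, s1, t1, p1⟩ := h1.2 q c d m' hm'
      obtain ⟨i2, s2, t2, p2⟩ := h2.2 q c d m' hm'
      exact ⟨i1.trans i2, s1.trans s2, t1.trans t2, p1.trans p2⟩
  · rintro x x' z ⟨hstep, hops⟩
    constructor
    · intro q
      rw [extStep_append, extStep_append, hstep q]
    · intro q
      rw [labelsFrom_append, labelsFrom_append, hstep q]
      exact eqOps_append (hops q)
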